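/- Let H be a satisfiable CNF formula, p_init any assignment, and s a satisfying assignment closest to p_init in Hamming distance. Then no set P consisting only of assignments falsifying H can be an SSA of H with center p_init. (Equivalently: for any P of falsifying assignments with p_init ∈ P and any AC-mapping Φ, there exists p ∈ P with Nbhd(p_init, p, Φ(p)) ⊄ P.) -/
import Mathlib


open Function

abbrev Clause (V : Type*) := Finset (V × Bool)
abbrev CNF (V : Type*) := Set (Clause V)

def satLit {V : Type*} (p : V → Bool) (l : V × Bool) : Prop := p l.1 = l.2

def satClause {V : Type*} (p : V → Bool) (C : Clause V) : Prop := ∃ l ∈ C, satLit p l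

def satCNF {V : Type*} (p : V → Bool) (H : CNF V) : Prop := ∀ C ∈ H, satClause p C

def falsifies {V : Type*} (p : V → Bool) (C : Clause V) : Prop := ¬ satClause p C

/-- Hamming distance between two assignments. -/
def hdist {V : Type*} [Fintype V] [DecidableEq V] (p q : V → Bool) : ℕ :=
  (Finset.univ.filter fun v => p v ≠ q v).card

/-- The assignment obtained from `p` by flipping the value of variable `v`. -/
def flipAt {V : Type*} [DecidableEq V] (p : V → Bool) (v : V) : V → Bool :=
  Function.update p v (!p v)

/-- `Nbhd p C`: assignments at Hamming distance 1 from `p` satisfying `C`. -/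
def Nbhd {V : Type*} [Fintype V] [DecidableEq V] (p : V → Bool) (C : Clause V) :
    Set (V → Bool) :=
  {r | hdist p r = 1 ∧ satClause r C}

/-- `NbhdC q p C`: members of `Nbhd p C` strictly farther from `q` than `p` is. -/
def NbhdC {V : Type*} [Fintype V] [DecidableEq V] (q p : V → Bool) (C : Clause V) :
    Set (V → Bool) :=
  {r | hdist p r = 1 ∧ satClause r C ∧ hdist q r > hdist q p}

/-- `P` is a stable set of assignments (SSA) of `H` with center `pinit` and AC-mapping `Φ`. -/
def IsSSA {V : Type*} [Fintype V] [DecidableEq V] (H : CNF V) (P : Set (V → Bool))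
    (pinit : V → Bool) (Φ : (V → Bool) → Clause V) : Prop :=
  pinit ∈ P ∧ ∀ p ∈ P, Φ p ∈ H ∧ falsifies p (Φ p) ∧ NbhdC pinit p (Φ p) ⊆ P

lemma flipAt_apply {V : Type*} [DecidableEq V] (p : V → Bool) (v w : V) :
    flipAt p v w = if w = v then !p v else p w := by
  simp [flipAt, Function.update_apply]

lemma filter_flip {V : Type*} [Fintype V] [DecidableEq V] (q p : V → Bool) (v : V) :
    (Finset.univ.filter fun w => q w ≠ flipAt p v w) =
      if p v = q v then insert v (Finset.univ.filter fun w => q w ≠ p w)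
      else (Finset.univ.filter fun w => q w ≠ p w).erase v := by
  split_ifs with h
  · ext w
    by_cases hw : w = v
    · subst hw
      simp only [flipAt_apply, if_pos rfl, Finset.mem_filter, Finset.mem_univ,
        true_and, Finset.mem_insert, true_or, iff_true]
      rw [← h]
      cases p w <;> simp
    · simp [flipAt_apply, hw]
  · ext w
    by_cases hw : w = v
    · subst hw
      simp only [flipAt_apply, if_pos rfl, Finset.mem_filter, Finset.mem_univ,
        true_and, Finset.mem_erase, ne_eq, not_true_eq_false, false_and, iff_false,
        not_not]
      cases hp : p w <;> cases hq : q w <;> simp_all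
    · simp [flipAt_apply, hw]

lemma hdist_flip_eq {V : Type*} [Fintype V] [DecidableEq V] (q p : V → Bool) (v : V)
    (h : p v = q v) : hdist q (flipAt p v) = hdist q p + 1 := by
  unfold hdist
  rw [filter_flip, if_pos h, Finset.card_insert_of_notMem]
  simp [h]

lemma hdist_flip_ne {V : Type*} [Fintype V] [DecidableEq V] (q p : V → Bool) (v : V)
    (h : p v ≠ q v) : hdist q p = hdist q (flipAt p v) + 1 := by
  unfold hdist
  rw [filter_flip, if_neg h, Finset.card_erase_of_mem (by simp [Ne.symm h])]
  have : 0 < (Finset.univ.filter fun w => q w ≠ p w).card :=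
    Finset.card_pos.2 ⟨v, by simp [Ne.symm h]⟩
  omega

lemma hdist_self_flip {V : Type*} [Fintype V] [DecidableEq V] (p : V → Bool) (v : V) :
    hdist p (flipAt p v) = 1 := by
  rw [hdist_flip_eq p p v rfl]
  simp [hdist]

/-- if `H` is satisfiable with `s` a closest satisfying assignment to
`pinit`, then no set of falsifying assignments containing `pinit` is an SSA of `H`
with center `pinit`. -/
theorem no_ssa_of_satisfiable {V : Type*} [Fintype V] [DecidableEq V]
    (H : CNF V) (pinit s : V → Bool) (hs : satCNF s H)
    (hclosest : ∀ t : V → Bool, satCNF t H → hdist pinit s ≤ hdist pinit t) :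
    ∀ (P : Set (V → Bool)) (Φ : (V → Bool) → Clause V),
      (∀ p ∈ P, ¬ satCNF p H) → pinit ∈ P → ¬ IsSSA H P pinit Φ := by
  intro P Φ hfals hpinit hSSA
  obtain ⟨-, hP⟩ := hSSA
  suffices h : ∀ n, ∀ p, p ∈ P → (∀ v, p v ≠ pinit v → p v = s v) →
      hdist s p = n → False by
    exact h (hdist s pinit) pinit hpinit (fun v hv => absurd rfl hv) rfl
  intro n
  induction n using Nat.strong_induction_on with
  | _ n ih =>
    intro p hp hbetween hn
    obtain ⟨hΦH, hfalsC, hNb⟩ := hP p hp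
    obtain ⟨l, hl, hsl⟩ := hs (Φ p) hΦH
    have hpl : p l.1 ≠ l.2 := fun h => hfalsC ⟨l, hl, h⟩
    set v := l.1 with hv
    have hps : p v ≠ s v := by rw [hsl]; exact hpl
    have hpp : p v = pinit v := by
      by_contra h
      exact hps (hbetween v h)
    set r := flipAt p v with hr
    have hrv : r v = s v := by
      rw [hr, flipAt_apply, if_pos rfl]
      cases hpv : p v <;> cases hsv : s v <;> simp_all
    have hsatr : satClause r (Φ p) := ⟨l, hl, by rw [satLit, ← hv, hrv, hsl]⟩
    have hdpinit : hdist pinit r = hdist pinit p + 1 :=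
      hdist_flip_eq pinit p v (by rw [hpp])
    have hrP : r ∈ P := hNb ⟨hdist_self_flip p v, hsatr, by omega⟩
    have hdr : hdist s p = hdist s r + 1 := hdist_flip_ne s p v hps
    refine ih (hdist s r) (by omega) r hrP ?_ rfl
    intro w hw
    by_cases hwv : w = v
    · subst hwv; exact hrv
    · have : r w = p w := by rw [hr, flipAt_apply, if_neg hwv]
      rw [this] at hw ⊢
      exact hbetween w hw
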